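/- arXiv:2308.16359 — 2 statements merged into one kernel-verified Lean document; each statement's English description precedes it below -/
import Mathlib

section
/- Let x, y, z ∈ Aut(T). Let p = [v0, x·v0] ∩ [x·v0, xy·v0] and q = [x·v0, xy·v0] ∩ [xy·v0, xyz·v0] (both are subpaths of [x·v0, xy·v0], of lengths δ(x⁻¹, y) and δ(y⁻¹, z) respectively), and set Δ = |y| − δ(x⁻¹, y) − δ(y⁻¹, z). If Δ > 0 then p and q are disjoint and d(p, q) = Δ; if Δ ≤ 0 then p ∩ q is a path of length −Δ. -/
noncomputable section

open Pointwise

namespace TreePaper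

variable {V : Type*}

section Defs

variable (T : SimpleGraph V) (v0 : V)

/-- The vertex set of the geodesic segment `[u, w]` in the tree `T`. -/
def seg (u w : V) : Set V := {x | T.dist u x + T.dist x w = T.dist u w}

/-- `|g| = d(v0, g·v0)`. -/
def nrm (g : T ≃g T) : ℕ := T.dist v0 (g v0)

/-- `δ(g, h) = (|g| + |h| - |g⁻¹h|)/2`, as a rational number. -/
noncomputable def dlt (g h : T ≃g T) : ℚ :=
  ((nrm T v0 g : ℚ) + (nrm T v0 h : ℚ) - (nrm T v0 (g⁻¹ * h) : ℚ)) / 2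

/-- An automorphism is elliptic if it fixes a vertex or inverts an edge. -/
def IsElliptic (g : T ≃g T) : Prop :=
  (∃ v : V, g v = v) ∨ (∃ u w : V, T.Adj u w ∧ g u = w ∧ g w = u)

/-- Hyperbolic = not elliptic. -/
def IsHyperbolic (g : T ≃g T) : Prop := ¬ IsElliptic T g

/-- Translation length: the minimum of `d(v, g·v)` over all vertices `v`. -/
noncomputable def tl (g : T ≃g T) : ℕ := sInf (Set.range fun v : V => T.dist v (g v))

/-- The (vertex set of the) axis of `g`: vertices moved exactly the translation length. -/
def axisSet (g : T ≃g T) : Set V := {v : V | T.dist v (g v) = tl T g}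

/-- A subgroup is purely hyperbolic if every nontrivial element is hyperbolic. -/
def PurelyHyperbolic (G : Subgroup (T ≃g T)) : Prop :=
  ∀ g ∈ G, g ≠ 1 → IsHyperbolic T g

/-- `X^± = X ∪ X⁻¹`. -/
def Xpm (X : Set (T ≃g T)) : Set (T ≃g T) := X ∪ X⁻¹

/-- Condition N1: `X ∩ X⁻¹ = ∅`. -/
def N1 (X : Set (T ≃g T)) : Prop := X ∩ X⁻¹ = ∅

/-- Condition N2: `|xy| ≥ max (|x|, |y|)` for `x, y ∈ X^±` with `x ≠ y⁻¹`. -/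
def N2 (X : Set (T ≃g T)) : Prop :=
  ∀ x ∈ Xpm T X, ∀ y ∈ Xpm T X, x ≠ y⁻¹ →
    max (nrm T v0 x) (nrm T v0 y) ≤ nrm T v0 (x * y)

/-- Condition N3: `|xyz| > |x| + |z| - |y|` for suitable `x, y, z ∈ X^±`. -/
def N3 (X : Set (T ≃g T)) : Prop :=
  ∀ x ∈ Xpm T X, ∀ y ∈ Xpm T X, ∀ z ∈ Xpm T X, x ≠ y⁻¹ → y ≠ z⁻¹ →
    (nrm T v0 x : ℤ) + (nrm T v0 z : ℤ) - (nrm T v0 y : ℤ) < (nrm T v0 (x * y * z) : ℤ)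

/-- Condition N2′: `2δ(x⁻¹, y) ≤ min (|x|, |y|)`. -/
noncomputable def N2' (X : Set (T ≃g T)) : Prop :=
  ∀ x ∈ Xpm T X, ∀ y ∈ Xpm T X, x ≠ y⁻¹ →
    2 * dlt T v0 x⁻¹ y ≤ min (nrm T v0 x : ℚ) (nrm T v0 y : ℚ)

/-- Condition N3′: `δ(x⁻¹, y) + δ(y⁻¹, z) < |y|`. -/
noncomputable def N3' (X : Set (T ≃g T)) : Prop :=
  ∀ x ∈ Xpm T X, ∀ y ∈ Xpm T X, ∀ z ∈ Xpm T X, x ≠ y⁻¹ → y ≠ z⁻¹ →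
    dlt T v0 x⁻¹ y + dlt T v0 y⁻¹ z < (nrm T v0 y : ℚ)

/-- `X` is N-reduced: no nontrivial elliptic elements, and N1, N2, N3 hold. -/
def NReduced (X : Set (T ≃g T)) : Prop :=
  (∀ x ∈ X, x ≠ 1 → ¬ IsElliptic T x) ∧ N1 T X ∧ N2 T v0 X ∧ N3 T v0 X

/-- `H(g)`: the vertex set of the initial segment of `[v0, g·v0]` of length `⌊|g|/2⌋`. -/
def halfSet (g : T ≃g T) : Set V :=
  {x : V | x ∈ seg T v0 (g v0) ∧ T.dist v0 x ≤ nrm T v0 g / 2}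

/-- The endpoint of `H(g)`: the vertex on `[v0, g·v0]` at distance `⌊|g|/2⌋` from `v0`.
(Since paths in a tree starting at `v0` are uniquely determined by their endpoints, we
identify the path `H(g)` with this vertex.) -/
noncomputable def halfVertex (g : T ≃g T) : V :=
  letI := Classical.dec (∃ m, m ∈ seg T v0 (g v0) ∧ T.dist v0 m = nrm T v0 g / 2)
  if h : ∃ m, m ∈ seg T v0 (g v0) ∧ T.dist v0 m = nrm T v0 g / 2 then h.choose else v0

/-- `X` is a free basis of `⟨X⟩`: the homomorphism from the free group on `X` induced
by the inclusion is an isomorphism onto `⟨X⟩`. -/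
def IsFreeBasis (X : Set (T ≃g T)) : Prop :=
  Function.Injective (FreeGroup.lift (fun x : X => (x : T ≃g T))) ∧
  MonoidHom.range (FreeGroup.lift (fun x : X => (x : T ≃g T))) = Subgroup.closure X

/-- A subgroup of `Aut T` is discrete iff some finite set of vertices has trivial
pointwise stabilizer. -/
def IsDiscrete (G : Subgroup (T ≃g T)) : Prop :=
  ∃ F : Finset V, ∀ g ∈ G, (∀ v ∈ F, g v = v) → g = 1

end Defs

section Order

variable (T : SimpleGraph V) (v0 : V)

/-- The assumed properties of the chosen well-ordering of paths starting at `v0`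
(paths from `v0` are identified with their endpoints): it is a well-order, shorter
paths precede longer paths, and it is lexicographic. -/
structure IsPathOrder (lt : V → V → Prop) : Prop where
  wellOrder : IsWellOrder V lt
  short : ∀ u w : V, T.dist v0 u < T.dist v0 w → lt u w
  lex : ∀ u w : V, T.dist v0 u = T.dist v0 w → ∀ u' w' : V,
    u' ∈ seg T v0 u → w' ∈ seg T v0 w → T.dist v0 u' = T.dist v0 w' → lt u' w' → lt u w

/-- The ordering `≺` on two-element sets of paths (identified with their endpoints):
`A ≺ B` iff `A ≠ B` and the least element of the symmetric difference lies in `A`. -/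
def pairLt (lt : V → V → Prop) (A B : Set V) : Prop :=
  A ≠ B ∧ ∃ m ∈ (A \ B) ∪ (B \ A), m ∈ A ∧ ∀ x ∈ (A \ B) ∪ (B \ A), x ≠ m → lt m x

/-- `g ≺ h` iff `|g| = |h|` and `{H(g), H(g⁻¹)} ≺ {H(h), H(h⁻¹)}`. -/
noncomputable def autPrec (lt : V → V → Prop) (g h : T ≃g T) : Prop :=
  nrm T v0 g = nrm T v0 h ∧
    pairLt lt {halfVertex T v0 g, halfVertex T v0 g⁻¹}
      {halfVertex T v0 h, halfVertex T v0 h⁻¹}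

/-- `g <* h` iff `|g| < |h|` or `g ≺ h`. -/
noncomputable def autLtStar (lt : V → V → Prop) (g h : T ≃g T) : Prop :=
  nrm T v0 g < nrm T v0 h ∨ autPrec T v0 lt g h

/-- Condition N4: `x <* xy` for all `x, y ∈ X^±` with `x ≠ y⁻¹`. -/
noncomputable def N4 (lt : V → V → Prop) (X : Set (T ≃g T)) : Prop :=
  ∀ x ∈ Xpm T X, ∀ y ∈ Xpm T X, x ≠ y⁻¹ → autLtStar T v0 lt x (x * y)

/-- `X` is strongly N-reduced (w.r.t. `v0` and `<*`): a free basis satisfying N1 and N4. -/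
noncomputable def StronglyNReduced (lt : V → V → Prop) (X : Set (T ≃g T)) : Prop :=
  IsFreeBasis T X ∧ N1 T X ∧ N4 T v0 lt X

end Order

section Words

variable (T : SimpleGraph V)

/-- The product `a₀ a₁ ⋯ a_{k-1}`. -/
def wordProd (a : ℕ → T ≃g T) (k : ℕ) : T ≃g T := ((List.range k).map a).prod

/-- The product `aᵢ a_{i+1} ⋯ a_j` (inclusive endpoints). -/
def segProd (a : ℕ → T ≃g T) (i j : ℕ) : T ≃g T := ((List.range' i (j + 1 - i)).map a).prod

/-- `a 0, …, a (n-1)` is a reduced word in `X`: each letter lies in `X^±` and no letter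
is followed by its inverse. -/
def IsReducedWord (X : Set (T ≃g T)) (a : ℕ → T ≃g T) (n : ℕ) : Prop :=
  (∀ i < n, a i ∈ Xpm T X) ∧ ∀ i, i + 1 < n → a (i + 1) ≠ (a i)⁻¹

end Words

section Geometry

variable (T : SimpleGraph V) (v0 : V)

/-- `p` is a nearest-point projection of `w` to the set `A`. -/
def NearestPt (A : Set V) (w p : V) : Prop :=
  p ∈ A ∧ ∀ z ∈ A, T.dist w p ≤ T.dist w z

/-- Distance between two sets of vertices. -/
noncomputable def setDist (A B : Set V) : ℕ :=
  sInf {n : ℕ | ∃ a ∈ A, ∃ b ∈ B, T.dist a b = n}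

/-- A vertex `p` of the axis of `g` lies in the half-open interval `U_g^0`
(of radius `l(g)/2` about the projection `c` of `v0`, closed at the `<`-smaller end):
either `d(c,p) < l(g)/2`, or `d(c,p) = l(g)/2` and `p` precedes the opposite boundary
vertex in the ordering. -/
def inU0 (lt : V → V → Prop) (g : T ≃g T) (c p : V) : Prop :=
  2 * T.dist c p < tl T g ∨
    (2 * T.dist c p = tl T g ∧
      ∀ p', p' ∈ axisSet T g → T.dist c p' = T.dist c p → p' ≠ p → lt p p')

/-- `X` admits a fundamental system: `X` has no nontrivial elliptic elements and for all
distinct `g, h ∈ X`, the projection of the axis of `h` to the axis of `g` is contained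
in `U_g^0`. -/
def AdmitsFundamentalSystem (lt : V → V → Prop) (X : Set (T ≃g T)) : Prop :=
  (∀ x ∈ X, x ≠ 1 → ¬ IsElliptic T x) ∧
  ∀ g ∈ X, ∀ h ∈ X, g ≠ h → ∀ c z p : V,
    NearestPt T (axisSet T g) v0 c → z ∈ axisSet T h →
    NearestPt T (axisSet T g) z p → inU0 T lt g c p

end Geometry



section AuxTree

variable {T : SimpleGraph V}

open SimpleGraph

lemma mem_seg {u v s : V} : s ∈ seg T u v ↔ T.dist u s + T.dist s v = T.dist u v := Iff.rfl

lemma seg_swap {u v s : V} (h : s ∈ seg T u v) : s ∈ seg T v u := by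
  rw [mem_seg] at h ⊢
  have h1 : T.dist v s = T.dist s v := T.dist_comm
  have h2 : T.dist s u = T.dist u s := T.dist_comm
  have h3 : T.dist v u = T.dist u v := T.dist_comm
  omega

lemma left_mem_seg (T : SimpleGraph V) (u v : V) : u ∈ seg T u v := by
  simp [mem_seg, SimpleGraph.dist_self]

lemma right_mem_seg (T : SimpleGraph V) (u v : V) : v ∈ seg T u v := by
  simp [mem_seg, SimpleGraph.dist_self]

/-- B3: if `t ∈ [a,b]` and `s ∈ [a,t]` then `s ∈ [a,b]` and `t ∈ [s,b]`. -/
lemma seg_trans (hc : T.Connected) {a b t s : V} (ht : t ∈ seg T a b) (hs : s ∈ seg T a t) :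
    s ∈ seg T a b ∧ t ∈ seg T s b := by
  rw [mem_seg] at ht hs
  have tri1 : T.dist s b ≤ T.dist s t + T.dist t b := hc.dist_triangle
  have tri2 : T.dist a b ≤ T.dist a s + T.dist s b := hc.dist_triangle
  constructor <;> rw [mem_seg] <;> omega

/-- suffix version -/
lemma seg_trans' (hc : T.Connected) {a b t s : V} (ht : t ∈ seg T a b) (hs : s ∈ seg T t b) :
    s ∈ seg T a b :=
  seg_swap ((seg_trans hc (seg_swap ht) (seg_swap hs)).1)

lemma support_mem_seg (hc : T.Connected) {u v : V} {p : T.Walk u v}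
    (hp : p.length = T.dist u v) {s : V} (hs : s ∈ p.support) : s ∈ seg T u v := by
  classical
  have hsp := congrArg Walk.length (p.take_spec hs)
  rw [Walk.length_append] at hsp
  have h1 : T.dist u s ≤ (p.takeUntil s hs).length := dist_le _
  have h2 : T.dist s v ≤ (p.dropUntil s hs).length := dist_le _
  have tri : T.dist u v ≤ T.dist u s + T.dist s v := hc.dist_triangle
  rw [mem_seg]
  omega

lemma isPath_append_of_disjoint {a t c : V} {p : T.Walk a t} {q : T.Walk t c}
    (hp : p.IsPath) (hq : q.IsPath)
    (h : ∀ r, r ∈ p.support → r ∈ q.support → r = t) : (p.append q).IsPath := by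
  rw [Walk.isPath_def, Walk.support_append]
  refine List.Nodup.append hp.support_nodup (hq.support_nodup.tail) ?_
  intro r hr hr'
  have : r = t := h r hr (List.mem_of_mem_tail hr')
  subst this
  have := hq.support_nodup
  rw [q.support_eq_cons] at this
  exact (List.nodup_cons.mp this).1 hr'

lemma path_length_eq (hT : T.IsTree) {u v : V} {p : T.Walk u v} (hp : p.IsPath) :
    p.length = T.dist u v := by
  obtain ⟨q, hq, hql⟩ := hT.isConnected.exists_path_of_dist u v
  have heq : (⟨p, hp⟩ : T.Path u v) = ⟨q, hq⟩ := hT.IsAcyclic.path_unique _ _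
  rw [show p = q from congrArg Subtype.val heq, hql]

/-- Key gluing lemma. -/
lemma dist_add_of_seg_inter (hT : T.IsTree) {a t c : V}
    (h : ∀ r, r ∈ seg T a t → r ∈ seg T t c → r = t) :
    T.dist a c = T.dist a t + T.dist t c := by
  have hc := hT.isConnected
  obtain ⟨p, hp, hpl⟩ := hc.exists_path_of_dist a t
  obtain ⟨q, hq, hql⟩ := hc.exists_path_of_dist t c
  have hap : (p.append q).IsPath :=
    isPath_append_of_disjoint hp hq fun r hr hr' =>
      h r (support_mem_seg hc hpl hr) (support_mem_seg hc hql hr')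
  have := path_length_eq hT hap
  rw [Walk.length_append] at this
  omega

lemma mem_support_of_mem_seg (hT : T.IsTree) {u v s : V} (hs : s ∈ seg T u v)
    {p : T.Walk u v} (hp : p.IsPath) : s ∈ p.support := by
  have hc := hT.isConnected
  obtain ⟨p1, hp1, hl1⟩ := hc.exists_path_of_dist u s
  obtain ⟨p2, hp2, hl2⟩ := hc.exists_path_of_dist s v
  have hap : (p1.append p2).IsPath := by
    refine isPath_append_of_disjoint hp1 hp2 fun r hr hr' => ?_
    have h1 := support_mem_seg hc hl1 hr
    have h2 := support_mem_seg hc hl2 hr'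
    rw [mem_seg] at h1 h2 hs
    have tri : T.dist u v ≤ T.dist u r + T.dist r v := hc.dist_triangle
    have hcm : T.dist r s = T.dist s r := T.dist_comm
    have h0 : T.dist r s = 0 := by omega
    exact (hc.dist_eq_zero_iff.mp h0)
  have heq : (⟨p1.append p2, hap⟩ : T.Path u v) = ⟨p, hp⟩ := hT.IsAcyclic.path_unique _ _
  have : s ∈ (p1.append p2).support := by
    rw [Walk.mem_support_append_iff]
    exact Or.inl (Walk.end_mem_support p1)
  rwa [show p1.append p2 = p from congrArg Subtype.val heq] at this

/-- Ordering lemma: two points on `[a,b]`, the one closer to `b` is beyond the other. -/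
lemma seg_order (hT : T.IsTree) {a b s t : V} (hs : s ∈ seg T a b) (ht : t ∈ seg T a b)
    (h : T.dist s b ≤ T.dist t b) : s ∈ seg T t b := by
  classical
  have hc := hT.isConnected
  obtain ⟨p, hp, hpl⟩ := hc.exists_path_of_dist a b
  have hsupt : t ∈ p.support := mem_support_of_mem_seg hT ht hp
  have hsups : s ∈ p.support := mem_support_of_mem_seg hT hs hp
  have hspec := p.take_spec hsupt
  rw [← hspec, Walk.mem_support_append_iff] at hsups
  have hlen := congrArg Walk.length hspec
  rw [Walk.length_append] at hlen
  have h1 : T.dist a t ≤ (p.takeUntil t hsupt).length := dist_le _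
  have h2 : T.dist t b ≤ (p.dropUntil t hsupt).length := dist_le _
  have htm := mem_seg.mp ht
  have hlen1 : (p.takeUntil t hsupt).length = T.dist a t := by omega
  have hlen2 : (p.dropUntil t hsupt).length = T.dist t b := by omega
  rcases hsups with hcase | hcase
  · have h3 := support_mem_seg hc hlen1 hcase
    rw [mem_seg] at h3 hs ⊢
    have hsm := mem_seg.mp hs
    have hcm : T.dist s t = T.dist t s := T.dist_comm
    have h0 : T.dist t s = 0 := by omega
    have : t = s := hc.dist_eq_zero_iff.mp (by omega)
    subst this
    simp [SimpleGraph.dist_self]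
  · exact support_mem_seg hc hlen2 hcase

/-- Existence of the median. -/
lemma exists_median (hT : T.IsTree) (a b c : V) :
    ∃ m, m ∈ seg T a b ∧ m ∈ seg T b c ∧ m ∈ seg T a c := by
  have hc := hT.isConnected
  classical
  set S : Set ℕ := (fun s => T.dist b s) '' (seg T a b ∩ seg T b c) with hS
  have hne : S.Nonempty := ⟨T.dist b b, b, ⟨right_mem_seg T a b, left_mem_seg T b c⟩, rfl⟩
  have hbdd : BddAbove S := by
    refine ⟨T.dist a b, ?_⟩
    rintro n ⟨s, ⟨h1, _⟩, rfl⟩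
    rw [mem_seg] at h1
    have hcm : T.dist b s = T.dist s b := T.dist_comm
    simp only []
    omega
  obtain ⟨m, ⟨hmab, hmbc⟩, hdm⟩ := Nat.sSup_mem hne hbdd
  have hdm' : T.dist b m = sSup S := hdm
  refine ⟨m, hmab, hmbc, ?_⟩
  have key : T.dist a c = T.dist a m + T.dist m c := by
    apply dist_add_of_seg_inter hT
    intro r hr1 hr2
    have A := seg_trans hc hmab hr1
    have B := seg_trans hc (seg_swap hmbc) (seg_swap hr2)
    -- A.1 : r ∈ seg a b, A.2 : m ∈ seg r b ; B.1 : r ∈ seg c b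
    have hrS : T.dist b r ∈ S := ⟨r, ⟨A.1, seg_swap B.1⟩, rfl⟩
    have hle : T.dist b r ≤ sSup S := le_csSup hbdd hrS
    have h2 := mem_seg.mp A.2
    have hc1 : T.dist r m = T.dist m r := T.dist_comm
    have hc2 : T.dist b r = T.dist r b := T.dist_comm
    have hc3 : T.dist b m = T.dist m b := T.dist_comm
    have h0 : T.dist m r = 0 := by omega
    exact ((hc.dist_eq_zero_iff.mp h0)).symm
  rw [mem_seg]
  omega

lemma median_dist {a b c m : V} (h1 : m ∈ seg T a b) (h2 : m ∈ seg T b c)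
    (h3 : m ∈ seg T a c) :
    T.dist a b + T.dist b c = T.dist a c + 2 * T.dist b m := by
  rw [mem_seg] at h1 h2 h3
  have hc1 : T.dist b m = T.dist m b := T.dist_comm
  omega

/-- The intersection of `[a,b]` and `[b,c]` is `[m,b]` for the median `m`. -/
lemma seg_inter_eq (hT : T.IsTree) {a b c m : V} (h1 : m ∈ seg T a b) (h2 : m ∈ seg T b c)
    (h3 : m ∈ seg T a c) : seg T a b ∩ seg T b c = seg T m b := by
  have hc := hT.isConnected
  ext s
  constructor
  · rintro ⟨hsab, hsbc⟩
    refine seg_order hT hsab h1 ?_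
    have e1 := mem_seg.mp hsab
    have e2 := mem_seg.mp hsbc
    have e3 := mem_seg.mp h1
    have e4 := mem_seg.mp h2
    have e5 := mem_seg.mp h3
    have tri : T.dist a c ≤ T.dist a s + T.dist s c := hc.dist_triangle
    have hc1 : T.dist b s = T.dist s b := T.dist_comm
    have hc2 : T.dist b m = T.dist m b := T.dist_comm
    omega
  · intro hsmb
    exact ⟨seg_trans' hc h1 hsmb, seg_swap (seg_trans' hc (seg_swap h2) hsmb)⟩


lemma iso_dist_le (hc : T.Connected) (e : T ≃g T) (u v : V) :
    T.dist (e u) (e v) ≤ T.dist u v := by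
  obtain ⟨p, hp⟩ := hc.exists_walk_length_eq_dist u v
  calc T.dist (e u) (e v) ≤ (p.map e.toHom).length := dist_le _
    _ = p.length := by simp
    _ = T.dist u v := hp

lemma iso_dist (hc : T.Connected) (e : T ≃g T) (u v : V) :
    T.dist (e u) (e v) = T.dist u v := by
  refine le_antisymm (iso_dist_le hc e u v) ?_
  have := iso_dist_le hc e.symm (e u) (e v)
  simpa using this

end AuxTree

/-- overlap of consecutive cancellation segments. -/
theorem statement_3 {V : Type*} (T : SimpleGraph V) (hT : T.IsTree) (v0 : V)
    (x y z : T ≃g T) :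
    (∃ a b : V, seg T v0 (x v0) ∩ seg T (x v0) ((x * y) v0) = seg T a b ∧
        (T.dist a b : ℚ) = dlt T v0 x⁻¹ y) ∧
    (∃ a b : V, seg T (x v0) ((x * y) v0) ∩ seg T ((x * y) v0) ((x * y * z) v0) = seg T a b ∧
        (T.dist a b : ℚ) = dlt T v0 y⁻¹ z) ∧
    (0 < (nrm T v0 y : ℚ) - dlt T v0 x⁻¹ y - dlt T v0 y⁻¹ z →
      (seg T v0 (x v0) ∩ seg T (x v0) ((x * y) v0)) ∩
          (seg T (x v0) ((x * y) v0) ∩ seg T ((x * y) v0) ((x * y * z) v0)) = ∅ ∧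
      (setDist T (seg T v0 (x v0) ∩ seg T (x v0) ((x * y) v0))
          (seg T (x v0) ((x * y) v0) ∩ seg T ((x * y) v0) ((x * y * z) v0)) : ℚ)
        = (nrm T v0 y : ℚ) - dlt T v0 x⁻¹ y - dlt T v0 y⁻¹ z) ∧
    ((nrm T v0 y : ℚ) - dlt T v0 x⁻¹ y - dlt T v0 y⁻¹ z ≤ 0 →
      ∃ a b : V, (seg T v0 (x v0) ∩ seg T (x v0) ((x * y) v0)) ∩
          (seg T (x v0) ((x * y) v0) ∩ seg T ((x * y) v0) ((x * y * z) v0)) = seg T a b ∧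
        (T.dist a b : ℚ)
          = -((nrm T v0 y : ℚ) - dlt T v0 x⁻¹ y - dlt T v0 y⁻¹ z)) := by
  have hc := hT.isConnected
  obtain ⟨m1, h1ab, h1bc, h1ac⟩ := exists_median hT v0 (x v0) ((x * y) v0)
  obtain ⟨m2, h2ab, h2bc, h2ac⟩ := exists_median hT (x v0) ((x * y) v0) ((x * y * z) v0)
  -- translation facts
  have f2 : T.dist (x v0) ((x * y) v0) = nrm T v0 y := iso_dist hc x v0 (y v0)
  have f1 : nrm T v0 x⁻¹ = T.dist v0 (x v0) := by
    show T.dist v0 (x⁻¹ v0) = T.dist v0 (x v0)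
    have h := iso_dist hc x v0 (x⁻¹ v0)
    rw [show x (x⁻¹ v0) = v0 from x.apply_symm_apply v0] at h
    rw [← h]
    exact T.dist_comm
  have f3 : nrm T v0 (x⁻¹⁻¹ * y) = T.dist v0 ((x * y) v0) := by rw [inv_inv]; rfl
  have f4 : nrm T v0 y⁻¹ = nrm T v0 y := by
    show T.dist v0 (y⁻¹ v0) = T.dist v0 (y v0)
    have h := iso_dist hc y v0 (y⁻¹ v0)
    rw [show y (y⁻¹ v0) = v0 from y.apply_symm_apply v0] at h
    rw [← h]
    exact T.dist_comm
  have f5 : T.dist ((x * y) v0) ((x * y * z) v0) = nrm T v0 z := iso_dist hc (x * y) v0 (z v0)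
  have f6 : nrm T v0 (y⁻¹⁻¹ * z) = T.dist (x v0) ((x * y * z) v0) := by
    rw [inv_inv]
    exact (iso_dist hc x v0 ((y * z) v0)).symm
  have g1 := median_dist h1ab h1bc h1ac
  have g2 := median_dist h2ab h2bc h2ac
  -- δ values
  have hd1 : dlt T v0 x⁻¹ y = (T.dist (x v0) m1 : ℚ) := by
    show ((nrm T v0 x⁻¹ : ℚ) + (nrm T v0 y : ℚ) - (nrm T v0 (x⁻¹⁻¹ * y) : ℚ)) / 2 = _
    rw [f1, f3, ← f2]
    have g1' : (T.dist v0 (x v0) : ℚ) + T.dist (x v0) ((x * y) v0)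
        = T.dist v0 ((x * y) v0) + 2 * T.dist (x v0) m1 := by exact_mod_cast g1
    linarith
  have hd2 : dlt T v0 y⁻¹ z = (T.dist ((x * y) v0) m2 : ℚ) := by
    show ((nrm T v0 y⁻¹ : ℚ) + (nrm T v0 z : ℚ) - (nrm T v0 (y⁻¹⁻¹ * z) : ℚ)) / 2 = _
    rw [f4, f6, ← f2, ← f5]
    have g2' : (T.dist (x v0) ((x * y) v0) : ℚ) + T.dist ((x * y) v0) ((x * y * z) v0)
        = T.dist (x v0) ((x * y * z) v0) + 2 * T.dist ((x * y) v0) m2 := by exact_mod_cast g2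
    linarith
  have hp := seg_inter_eq hT h1ab h1bc h1ac
  have hq := seg_inter_eq hT h2ab h2bc h2ac
  -- numeric shorthands
  have e1 := mem_seg.mp h1bc
  have e2 := mem_seg.mp h2ab
  have c1 : T.dist (x v0) m1 = T.dist m1 (x v0) := T.dist_comm
  have c2 : T.dist ((x * y) v0) m2 = T.dist m2 ((x * y) v0) := T.dist_comm
  refine ⟨⟨m1, x v0, hp, by rw [hd1]; exact_mod_cast c1.symm⟩,
    ⟨m2, (x * y) v0, hq, by rw [hd2]; exact_mod_cast c2.symm⟩, ?_, ?_⟩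
  · -- Δ > 0 case
    intro hpos
    rw [hd1, hd2, ← f2] at hpos
    have hlt : T.dist (x v0) m1 + T.dist ((x * y) v0) m2 < T.dist (x v0) ((x * y) v0) := by
      have : (T.dist (x v0) m1 : ℚ) + T.dist ((x * y) v0) m2
          < T.dist (x v0) ((x * y) v0) := by linarith
      exact_mod_cast this
    have hm2m1C : m2 ∈ seg T m1 ((x * y) v0) := by
      refine seg_order hT h2ab h1bc ?_
      omega
    have hkey := mem_seg.mp hm2m1C
    have hsum : T.dist m1 m2 + T.dist (x v0) m1 + T.dist ((x * y) v0) m2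
        = T.dist (x v0) ((x * y) v0) := by omega
    rw [hp, hq]
    constructor
    · ext s
      simp only [Set.mem_inter_iff, Set.mem_empty_iff_false, iff_false, not_and]
      intro hs1 hs2
      have hsCB : s ∈ seg T ((x * y) v0) (x v0) := seg_trans' hc (seg_swap h1bc) hs1
      have d1 := mem_seg.mp hs1
      have d2 := mem_seg.mp hs2
      have d3 := mem_seg.mp hsCB
      have c3 : T.dist ((x * y) v0) (x v0) = T.dist (x v0) ((x * y) v0) := T.dist_comm
      have c4 : T.dist ((x * y) v0) s = T.dist s ((x * y) v0) := T.dist_comm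
      omega
    · have hmem : T.dist m1 m2 ∈ {n : ℕ | ∃ a ∈ seg T m1 (x v0), ∃ b ∈ seg T m2 ((x * y) v0),
          T.dist a b = n} := ⟨m1, left_mem_seg T m1 (x v0), m2, left_mem_seg T m2 ((x * y) v0), rfl⟩
      have hlb : ∀ k ∈ {n : ℕ | ∃ a ∈ seg T m1 (x v0), ∃ b ∈ seg T m2 ((x * y) v0),
          T.dist a b = n}, T.dist m1 m2 ≤ k := by
        rintro k ⟨a', ha', b', hb', rfl⟩
        have hbBC : b' ∈ seg T (x v0) ((x * y) v0) := seg_trans' hc h2ab hb'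
        have d1 := mem_seg.mp ha'
        have d2 := mem_seg.mp hb'
        have d3 := mem_seg.mp hbBC
        have tri : T.dist b' (x v0) ≤ T.dist b' a' + T.dist a' (x v0) := hc.dist_triangle
        have c3 : T.dist b' (x v0) = T.dist (x v0) b' := T.dist_comm
        have c4 : T.dist a' b' = T.dist b' a' := T.dist_comm
        omega
      have hsd : setDist T (seg T m1 (x v0)) (seg T m2 ((x * y) v0)) = T.dist m1 m2 :=
        le_antisymm (Nat.sInf_le hmem) (le_csInf ⟨_, hmem⟩ hlb)
      rw [hsd, hd1, hd2, ← f2]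
      have : (T.dist m1 m2 : ℚ) + T.dist (x v0) m1 + T.dist ((x * y) v0) m2
          = T.dist (x v0) ((x * y) v0) := by exact_mod_cast hsum
      linarith
  · -- Δ ≤ 0 case
    intro hle
    rw [hd1, hd2, ← f2] at hle
    have hge : T.dist (x v0) ((x * y) v0) ≤ T.dist (x v0) m1 + T.dist ((x * y) v0) m2 := by
      have : (T.dist (x v0) ((x * y) v0) : ℚ)
          ≤ T.dist (x v0) m1 + T.dist ((x * y) v0) m2 := by linarith
      exact_mod_cast this
    have hm2m1B : m2 ∈ seg T m1 (x v0) := by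
      refine seg_order hT (seg_swap h2ab) (seg_swap h1bc) ?_
      have c3 : T.dist m2 (x v0) = T.dist (x v0) m2 := T.dist_comm
      have c4 : T.dist m1 (x v0) = T.dist (x v0) m1 := T.dist_comm
      omega
    have hm1m2C : m1 ∈ seg T m2 ((x * y) v0) := by
      refine seg_order hT h1bc h2ab ?_
      omega
    have k1 := mem_seg.mp hm2m1B
    have k2 := mem_seg.mp hm1m2C
    have c5 : T.dist m1 m2 = T.dist m2 m1 := T.dist_comm
    have hsum : T.dist m2 m1 + T.dist (x v0) ((x * y) v0)
        = T.dist (x v0) m1 + T.dist ((x * y) v0) m2 := by omega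
    refine ⟨m2, m1, ?_, ?_⟩
    · rw [hp, hq]
      ext s
      constructor
      · rintro ⟨hs1, hs2⟩
        have hsCB : s ∈ seg T ((x * y) v0) (x v0) := seg_trans' hc (seg_swap h1bc) hs1
        have d1 := mem_seg.mp hs1
        have d2 := mem_seg.mp hs2
        have d3 := mem_seg.mp hsCB
        have c3 : T.dist ((x * y) v0) (x v0) = T.dist (x v0) ((x * y) v0) := T.dist_comm
        have c4 : T.dist ((x * y) v0) s = T.dist s ((x * y) v0) := T.dist_comm
        have c6 : T.dist m1 s = T.dist s m1 := T.dist_comm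
        rw [mem_seg]
        omega
      · intro hs
        exact ⟨(seg_trans hc hm2m1B (seg_swap hs)).1, (seg_trans hc hm1m2C hs).1⟩
    · rw [hd1, hd2, ← f2]
      have : (T.dist m2 m1 : ℚ) + T.dist (x v0) ((x * y) v0)
          = T.dist (x v0) m1 + T.dist ((x * y) v0) m2 := by exact_mod_cast hsum
      linarith

end TreePaper

end
end

section
/- Let X be a finite subset of Aut(T). Then: (1) X satisfies N2 if and only if X satisfies N2′: 2δ(x⁻¹, y) ≤ min(|x|, |y|) for all x, y ∈ X^± with x ≠ y⁻¹. (2) If X satisfies N2, then X satisfies N3 if and only if X satisfies N3′: δ(x⁻¹, y) + δ(y⁻¹, z) < |y| for all x, y, z ∈ X^± with x ≠ y⁻¹ and y ≠ z⁻¹. -/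
/-
With `|g| = d(v0, g v0)` and `|g⁻¹| = |g|`, one has `2 δ(x⁻¹, y) = |x| + |y| - |xy|`, so N2 ↔ N2′
is arithmetic and N3′ reads `|x| + |z| < |xy| + |yz|`. The points `v0, x v0, xy v0, xyz v0` have
pairwise distances `|x|, |y|, |z|, |xy|, |yz|, |xyz|`, and the four-point condition of a tree says
that the two largest of the pair sums `|x| + |z|`, `|y| + |xyz|`, `|xy| + |yz|` are equal.
Hence `|x| + |z|` lies below one of the other two sums iff it lies below the other.
-/

noncomputable section

open Pointwise

namespace SimpleGraph

variable {V W : Type*} {G : SimpleGraph V} {G' : SimpleGraph W}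

theorem Iso.dist_apply (f : G ≃g G') (u v : V) : G'.dist (f u) (f v) = G.dist u v := by
  by_cases h : G.Reachable u v
  · apply le_antisymm
    · obtain ⟨p, hp⟩ := h.exists_walk_length_eq_dist
      simpa [hp] using dist_le (p.map f.toHom)
    · obtain ⟨q, hq⟩ := (h.map f.toHom).exists_walk_length_eq_dist
      simpa [hq] using dist_le (q.map f.symm.toHom)
  · have h' : ¬G'.Reachable (f u) (f v) := fun h' ↦ h (by simpa using h'.map f.symm.toHom)
    rw [dist_eq_zero_of_not_reachable h, dist_eq_zero_of_not_reachable h']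

theorem Connected.exists_adj_dist_lt (hG : G.Connected) {u v : V} (huv : u ≠ v) :
    ∃ w, G.Adj u w ∧ G.dist v w < G.dist v u := by
  obtain ⟨p, hp⟩ := hG.exists_walk_length_eq_dist u v
  cases p with
  | nil => exact absurd rfl huv
  | cons hadj q =>
    refine ⟨_, hadj, ?_⟩
    have := dist_le q
    rw [Walk.length_cons] at hp
    rw [dist_comm, dist_comm (u := v)]
    omega

variable {a b c u w : V}

theorem Connected.exists_isPath_cons_of_dist_lt (hG : G.Connected) (hu : G.Adj a u)
    (hub : G.dist b u < G.dist b a) : ∃ p : G.Walk u b, (Walk.cons hu p).IsPath := by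
  classical
  obtain ⟨p, hp, hpl⟩ := hG.exists_path_of_dist u b
  refine ⟨p, hp.cons fun ha ↦ ?_⟩
  have := dist_le (p.dropUntil a ha)
  have := p.length_dropUntil_le_length ha
  rw [dist_comm (u := b), dist_comm (u := b)] at hub
  omega

theorem IsTree.eq_of_adj_of_dist_lt (hG : G.IsTree) (hu : G.Adj a u) (hw : G.Adj a w)
    (hub : G.dist b u < G.dist b a) (hwb : G.dist b w < G.dist b a) : u = w := by
  obtain ⟨p, hp⟩ := hG.connected.exists_isPath_cons_of_dist_lt hu hub
  obtain ⟨q, hq⟩ := hG.connected.exists_isPath_cons_of_dist_lt hw hwb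
  have h := (hG.isAcyclic.subsingleton_path a b).elim ⟨_, hp⟩ ⟨_, hq⟩
  simpa using congrArg (fun r : G.Path a b ↦ (r : G.Walk a b).snd) h

theorem IsTree.dist_eq_add_of_adj_of_dist_lt (hG : G.IsTree) (hu : G.Adj a u)
    (hub : G.dist b u < G.dist b a) (hac : G.dist c a < G.dist c u) :
    G.dist b c = G.dist b a + G.dist a c := by
  induction hn : G.dist a c generalizing a u with
  | zero =>
    obtain rfl : a = c := (hG.connected.dist_eq_zero_iff).mp hn
    simp
  | succ n ih =>
    -- step from `a` towards `c`; as `u` is the only neighbour of `a` closer to `b`,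
    -- the new vertex `w` is farther from `b`, and the edge `w a` plays the role of `a u`
    obtain ⟨w, hw, hwc⟩ := hG.connected.exists_adj_dist_lt (u := a) (v := c) (by
      rintro rfl; simp at hn)
    have hwu : w ≠ u := by rintro rfl; omega
    have hbw : G.dist b a < G.dist b w := by
      have hne : ¬G.dist b w < G.dist b a := fun h ↦ hwu (hG.eq_of_adj_of_dist_lt hw hu h hub)
      have := hG.dist_eq_dist_add_one_of_adj b hw
      omega
    have hcw : G.dist w c = n := by
      have := hG.dist_eq_dist_add_one_of_adj c hw
      rw [dist_comm (u := c), dist_comm (u := c)] at this hwc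
      omega
    have := ih hw.symm hbw hwc hcw
    have := hG.dist_eq_dist_add_one_of_adj b hw
    omega

/-- The four-point condition. -/
theorem IsTree.dist_add_dist_le_max (hG : G.IsTree) (a b c d : V) :
    G.dist a d + G.dist b c ≤ max (G.dist a b + G.dist c d) (G.dist a c + G.dist b d) := by
  induction hn : G.dist a b generalizing a with
  | zero =>
    obtain rfl : a = b := (hG.connected.dist_eq_zero_iff).mp hn
    simp [add_comm]
  | succ n ih =>
    obtain ⟨u, hu, hub⟩ := hG.connected.exists_adj_dist_lt (u := a) (v := b) (by
      rintro rfl; simp at hn)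
    have hbu : G.dist u b = n := by
      have := hG.dist_eq_dist_add_one_of_adj b hu
      rw [dist_comm (u := b), dist_comm (u := b)] at this hub
      omega
    have hbc : G.dist b c ≤ G.dist b a + G.dist a c := hG.connected.dist_triangle
    have hcd : G.dist c d ≤ G.dist c a + G.dist a d := hG.connected.dist_triangle
    have hab : G.dist b a = G.dist a b := dist_comm
    have hac : G.dist c a = G.dist a c := dist_comm
    have had : G.dist d a = G.dist a d := dist_comm
    have hdc : G.dist d c = G.dist c d := dist_comm
    rw [le_max_iff]
    rcases hG.dist_eq_dist_add_one_of_adj c hu with hc | hc <;>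
      rcases hG.dist_eq_dist_add_one_of_adj d hu with hd | hd
    · have key := ih u hbu
      have : G.dist u c = G.dist c u := dist_comm
      have : G.dist u d = G.dist d u := dist_comm
      rw [le_max_iff] at key
      omega
    · have := hG.dist_eq_add_of_adj_of_dist_lt hu hub (c := d) (by omega)
      have := hG.dist_eq_add_of_adj_of_dist_lt hu (b := c) (c := d) (by omega) (by omega)
      omega
    · have := hG.dist_eq_add_of_adj_of_dist_lt hu hub (c := c) (by omega)
      have := hG.dist_eq_add_of_adj_of_dist_lt hu (b := d) (c := c) (by omega) (by omega)
      omega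
    · have := hG.dist_eq_add_of_adj_of_dist_lt hu hub (c := c) (by omega)
      have := hG.dist_eq_add_of_adj_of_dist_lt hu hub (c := d) (by omega)
      omega

end SimpleGraph

namespace TreePaper

variable {V : Type*} {T : SimpleGraph V} (v0 : V)

theorem nrm_inv (g : T ≃g T) : nrm T v0 g⁻¹ = nrm T v0 g := by
  have h := g.dist_apply v0 (g⁻¹ v0)
  rw [RelIso.apply_inv_self] at h
  rw [nrm, nrm, ← h, SimpleGraph.dist_comm]

theorem dist_apply_mul_apply (g h : T ≃g T) : T.dist (g v0) ((g * h) v0) = nrm T v0 h :=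
  g.dist_apply v0 (h v0)

theorem dlt_inv_left (g h : T ≃g T) :
    dlt T v0 g⁻¹ h = ((nrm T v0 g : ℚ) + nrm T v0 h - nrm T v0 (g * h)) / 2 := by
  simp only [dlt, inv_inv, nrm_inv]

theorem two_mul_dlt_inv_le_min_iff (x y : T ≃g T) :
    2 * dlt T v0 x⁻¹ y ≤ min (nrm T v0 x : ℚ) (nrm T v0 y) ↔
      max (nrm T v0 x) (nrm T v0 y) ≤ nrm T v0 (x * y) := by
  rw [dlt_inv_left, le_min_iff, max_le_iff, ← Nat.cast_le (α := ℚ), ← Nat.cast_le (α := ℚ)]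
  constructor <;> rintro ⟨h₁, h₂⟩ <;> constructor <;> linarith

theorem dlt_inv_add_dlt_inv_lt_iff (x y z : T ≃g T) :
    dlt T v0 x⁻¹ y + dlt T v0 y⁻¹ z < nrm T v0 y ↔
      nrm T v0 x + nrm T v0 z < nrm T v0 (x * y) + nrm T v0 (y * z) := by
  rw [dlt_inv_left, dlt_inv_left, ← Nat.cast_lt (α := ℚ)]
  push_cast
  constructor <;> intro h <;> linarith

theorem nrm_add_nrm_lt_nrm_mul_mul_add_iff (hT : T.IsTree) (x y z : T ≃g T) :
    nrm T v0 x + nrm T v0 z < nrm T v0 (x * y * z) + nrm T v0 y ↔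
      nrm T v0 x + nrm T v0 z < nrm T v0 (x * y) + nrm T v0 (y * z) := by
  have hz : T.dist ((x * y) v0) ((x * y * z) v0) = nrm T v0 z := dist_apply_mul_apply v0 _ _
  have hyz : T.dist (x v0) ((x * y * z) v0) = nrm T v0 (y * z) := by
    rw [mul_assoc]; exact dist_apply_mul_apply v0 _ _
  have hnrm : ∀ g : T ≃g T, T.dist v0 (g v0) = nrm T v0 g := fun _ ↦ rfl
  have h₁ := hT.dist_add_dist_le_max v0 (x v0) ((x * y) v0) ((x * y * z) v0)
  have h₂ := hT.dist_add_dist_le_max v0 (x v0) ((x * y * z) v0) ((x * y) v0)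
  rw [SimpleGraph.dist_comm (u := (x * y * z) v0)] at h₂
  simp only [hnrm, dist_apply_mul_apply, hz, hyz, le_max_iff] at h₁ h₂
  omega

theorem sub_nrm_lt_nrm_mul_mul_iff (hT : T.IsTree) (x y z : T ≃g T) :
    (nrm T v0 x : ℤ) + nrm T v0 z - nrm T v0 y < nrm T v0 (x * y * z) ↔
      dlt T v0 x⁻¹ y + dlt T v0 y⁻¹ z < nrm T v0 y := by
  rw [dlt_inv_add_dlt_inv_lt_iff, ← nrm_add_nrm_lt_nrm_mul_mul_add_iff v0 hT]
  omega

theorem statement_4_general {V : Type*} (T : SimpleGraph V) (hT : T.IsTree) (v0 : V)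
    (X : Set (T ≃g T)) :
    (N2 T v0 X ↔ N2' T v0 X) ∧ (N2 T v0 X → (N3 T v0 X ↔ N3' T v0 X)) := by
  refine ⟨?_, fun _ ↦ ?_⟩
  · simp only [N2, N2', two_mul_dlt_inv_le_min_iff]
  · simp only [N3, N3', sub_nrm_lt_nrm_mul_mul_iff v0 hT]

/-- N2 ↔ N2′, and (assuming N2) N3 ↔ N3′. -/
theorem statement_4 {V : Type*} (T : SimpleGraph V) (hT : T.IsTree) (v0 : V)
    (X : Set (T ≃g T)) (hXfin : X.Finite) :
    (N2 T v0 X ↔ N2' T v0 X) ∧ (N2 T v0 X → (N3 T v0 X ↔ N3' T v0 X)) :=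
  statement_4_general T hT v0 X

end TreePaper

end
end
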